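/- If C = (t - h₁)(t - h₂) = (t - k₁)(t - k₂) is a complementary pair of factorizations (i.e. C·conj(C) = (t-h₁)(t-conj(h₁))(t-k₁)(t-conj(k₁))), then also C·conj(C) = (t-h₂)(t-conj(h₂))(t-k₂)(t-conj(k₂)). -/

import Mathlib

/-!
The norm polynomial `N a = (t - a)(t - conj a) = t² - (a + conj a) t + a conj a` has real
coefficients, so it is central and monic. Since conjugation reverses products,
`C conj C = N h₂ N h₁ = N k₂ N k₁`. Comparing both with the hypothesis
`C conj C = N h₁ N k₁` and cancelling monic factors gives `N h₂ = N k₁` and `N k₂ = N h₁`.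
-/

open Quaternion Polynomial

/-- The split quaternions: `i² = -1`, `j² = k² = 1`. -/
abbrev SplitQuaternion : Type := ℍ[ℝ, -1, 1]

/-- Coefficientwise conjugation of a split quaternion polynomial. -/
noncomputable def pconj (C : Polynomial SplitQuaternion) : Polynomial SplitQuaternion :=
  ⟨AddMonoidAlgebra.ofCoeff (Finsupp.mapRange star (star_zero _) C.toFinsupp.coeff)⟩

theorem Polynomial.commute_X_sub_C_mul_X_sub_C {R A : Type*} [CommRing R] [Ring A] [Algebra R A]
    {a b : A} {s n : R} (hs : a + b = algebraMap R A s) (hn : a * b = algebraMap R A n)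
    (p : A[X]) : Commute ((X - C a) * (X - C b)) p := by
  have hexpand : (X - C a) * (X - C b)
      = X ^ 2 - algebraMap R A[X] s * X + algebraMap R A[X] n := by
    rw [algebraMap_apply, algebraMap_apply, ← hs, ← hn, C_add, C_mul, sub_mul, mul_sub, mul_sub,
      (commute_X (C b)).eq, sq]
    noncomm_ring
  rw [hexpand]
  exact (((commute_X p).pow_left 2).sub_left
    ((Algebra.commute_algebraMap_left s p).mul_left (commute_X p))).add_left
      (Algebra.commute_algebraMap_left n p)

theorem QuaternionAlgebra.commute_X_sub_C_mul_X_sub_C_star {R : Type*} [CommRing R]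
    {c₁ c₂ c₃ : R} (a : ℍ[R,c₁,c₂,c₃]) (p : ℍ[R,c₁,c₂,c₃][X]) :
    Commute ((X - C a) * (X - C (star a))) p :=
  commute_X_sub_C_mul_X_sub_C (by rw [coe_algebraMap]; exact a.self_add_star')
    (by rw [coe_algebraMap]; exact a.mul_star_eq_coe) p

theorem pconj_coeff (p : SplitQuaternion[X]) (n : ℕ) : (pconj p).coeff n = star (p.coeff n) :=
  rfl

theorem pconj_mul (p q : SplitQuaternion[X]) : pconj (p * q) = pconj q * pconj p := by
  refine Polynomial.ext fun n => ?_
  rw [pconj_coeff, coeff_mul, coeff_mul, star_sum, ← Finset.Nat.sum_antidiagonal_swap]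
  exact Finset.sum_congr rfl fun x _ => by simp [pconj_coeff, star_mul]

theorem pconj_X_sub_C (a : SplitQuaternion) : pconj (X - C a) = X - C (star a) := by
  refine Polynomial.ext fun n => ?_
  rw [pconj_coeff]
  simp only [coeff_sub, coeff_X, coeff_C, star_sub]
  split_ifs <;> simp

theorem X_sub_C_mul_X_sub_C_mul_pconj (a b : SplitQuaternion) :
    (X - C a) * (X - C b) * pconj ((X - C a) * (X - C b))
      = (X - C b) * (X - C (star b)) * ((X - C a) * (X - C (star a))) := by
  rw [pconj_mul, pconj_X_sub_C, pconj_X_sub_C, mul_assoc, ← mul_assoc (X - C b),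
    ← mul_assoc, ← (QuaternionAlgebra.commute_X_sub_C_mul_X_sub_C_star b _).eq, mul_assoc]

/-- If `C = (t - h₁)(t - h₂) = (t - k₁)(t - k₂)` is a complementary pair of
factorizations, i.e. `C conj C = (t-h₁)(t-conj h₁)(t-k₁)(t-conj k₁)`, then also
`C conj C = (t-h₂)(t-conj h₂)(t-k₂)(t-conj k₂)`. -/
theorem complementary_symmetry (h₁ h₂ k₁ k₂ : SplitQuaternion)
    (hfac : (X - Polynomial.C h₁) * (X - Polynomial.C h₂)
      = (X - Polynomial.C k₁) * (X - Polynomial.C k₂))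
    (hcomp : ((X - Polynomial.C h₁) * (X - Polynomial.C h₂)) *
        pconj ((X - Polynomial.C h₁) * (X - Polynomial.C h₂))
      = (X - Polynomial.C h₁) * (X - Polynomial.C (star h₁)) *
          ((X - Polynomial.C k₁) * (X - Polynomial.C (star k₁)))) :
    ((X - Polynomial.C h₁) * (X - Polynomial.C h₂)) *
        pconj ((X - Polynomial.C h₁) * (X - Polynomial.C h₂))
      = (X - Polynomial.C h₂) * (X - Polynomial.C (star h₂)) *
          ((X - Polynomial.C k₂) * (X - Polynomial.C (star k₂))) := by
  set N : SplitQuaternion → SplitQuaternion[X] := fun a => (X - C a) * (X - C (star a))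
  have hN_comm (a : SplitQuaternion) (p) : Commute (N a) p :=
    QuaternionAlgebra.commute_X_sub_C_mul_X_sub_C_star a p
  have hN_monic (a : SplitQuaternion) : (N a).Monic := (monic_X_sub_C a).mul (monic_X_sub_C _)
  have hh : N h₂ * N h₁ = N h₁ * N k₁ := by
    rw [← hcomp, X_sub_C_mul_X_sub_C_mul_pconj]
  have hk : N k₂ * N k₁ = N h₁ * N k₁ := by
    rw [← hcomp, hfac, X_sub_C_mul_X_sub_C_mul_pconj]
  have h₂k₁ : N h₂ = N k₁ := (hN_monic h₁).isRegular.right (hh.trans (hN_comm h₁ _).eq)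
  have k₂h₁ : N k₂ = N h₁ := (hN_monic k₁).isRegular.right hk
  calc _ = N h₁ * N k₁ := hcomp
    _ = N k₁ * N h₁ := (hN_comm h₁ _).eq
    _ = N h₂ * N k₂ := by rw [h₂k₁, k₂h₁]
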